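/- If a semi-Markovian causal model (SMCM) G over a finite vertex set V satisfies the Markov and Faithfulness assumptions with an independence model I over V, then G satisfies the V-adjacency-faithfulness assumption with I. -/

import Mathlib

/-- The kind of an edge as traversed from left to right along a path:
forward directed (`a → b`), backward directed (`a ← b`), or bidirected (`a ↔ b`). -/
inductive EKind : Type
  | fwd | bwd | bi
deriving DecidableEq, Inhabited

/-- The edge kind has an arrowhead at its left endpoint. -/
def EKind.arrowLeft : EKind → Prop
  | .fwd => False
  | .bwd => True
  | .bi  => True

/-- The edge kind has an arrowhead at its right endpoint. -/
def EKind.arrowRight : EKind → Prop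
  | .fwd => True
  | .bwd => False
  | .bi  => True

/-- A mixed graph over a vertex type `V`: a set of directed edges and a set of
bidirected edges between distinct vertices. -/
structure MGraph (V : Type) where
  dir : V → V → Prop
  bidir : V → V → Prop
  dir_irrefl : ∀ x, ¬ dir x x
  bidir_irrefl : ∀ x, ¬ bidir x x
  bidir_symm : ∀ x y, bidir x y → bidir y x

namespace MGraph

variable {V : Type}

/-- There is an edge of the given kind (read left-to-right) between `a` and `b`. -/
def edgeKind (G : MGraph V) : EKind → V → V → Prop
  | .fwd, a, b => G.dir a b
  | .bwd, a, b => G.dir b a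
  | .bi,  a, b => G.bidir a b

/-- `x` is an ancestor of `y`: `x = y` or there is a directed path from `x` to `y`. -/
def Ancestor (G : MGraph V) : V → V → Prop := Relation.ReflTransGen G.dir

/-- The graph has no directed cycle. -/
def Acyclic (G : MGraph V) : Prop := ∀ x y, G.Ancestor x y → G.Ancestor y x → x = y

/-- `x` and `y` are adjacent: some edge joins them. -/
def Adj (G : MGraph V) (x y : V) : Prop := G.dir x y ∨ G.dir y x ∨ G.bidir x y

/-- A path between `x` and `y`: a sequence of distinct vertices starting at `x` and
ending at `y`, together with, for each consecutive pair, an edge of the graph between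
them (recorded by its kind). -/
structure Path (G : MGraph V) (x y : V) : Type where
  verts : List V
  kinds : List EKind
  len_eq : verts.length = kinds.length + 1
  nodup : verts.Nodup
  head_eq : verts.head? = some x
  last_eq : verts.getLast? = some y
  valid : ∀ i, i < kinds.length →
    G.edgeKind (kinds.getD i .fwd) (verts.getD i x) (verts.getD (i + 1) x)

namespace Path

variable {G : MGraph V} {x y : V}

/-- The `i`-th vertex on the path. -/
def vert (p : G.Path x y) (i : ℕ) : V := p.verts.getD i x

/-- The kind of the `i`-th edge on the path. -/
def kind (p : G.Path x y) (i : ℕ) : EKind := p.kinds.getD i .fwd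

/-- The (non-endpoint) vertex at position `i` is a collider on the path: both incident
edges have an arrowhead at it. -/
def ColliderAt (p : G.Path x y) (i : ℕ) : Prop :=
  1 ≤ i ∧ i + 1 < p.verts.length ∧
    (p.kind (i - 1)).arrowRight ∧ (p.kind i).arrowLeft

/-- The path is m-connecting given `Z`: every non-collider on it is not in `Z` and
every collider on it has a descendant in `Z`. -/
def MConn (p : G.Path x y) (Z : Set V) : Prop :=
  ∀ i, 1 ≤ i → i + 1 < p.verts.length →
    (p.ColliderAt i → ∃ d ∈ Z, G.Ancestor (p.vert i) d) ∧
    (¬ p.ColliderAt i → p.vert i ∉ Z)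

/-- The path is an inducing path: every non-endpoint vertex is a collider on the path
and an ancestor of one of the endpoints. -/
def Inducing (p : G.Path x y) : Prop :=
  ∀ i, 1 ≤ i → i + 1 < p.verts.length →
    p.ColliderAt i ∧ (G.Ancestor (p.vert i) x ∨ G.Ancestor (p.vert i) y)

end Path

/-- Distinct vertices `x, y ∉ Z` are m-separated by `Z`: no path between them is
m-connecting given `Z`. -/
def MSep (G : MGraph V) (x y : V) (Z : Set V) : Prop :=
  x ≠ y ∧ x ∉ Z ∧ y ∉ Z ∧
    (∀ p : G.Path x y, ¬ p.MConn Z) ∧ (∀ p : G.Path y x, ¬ p.MConn Z)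

/-- Sets `A` and `B` are m-separated by `C`: every `a ∈ A` and `b ∈ B` are. -/
def MSepSets (G : MGraph V) (A B C : Set V) : Prop :=
  ∀ a ∈ A, ∀ b ∈ B, G.MSep a b C

/-- `x` and `y` are virtually adjacent: there is an inducing path between them. -/
def VAdj (G : MGraph V) (x y : V) : Prop :=
  x ≠ y ∧ ((∃ p : G.Path x y, p.Inducing) ∨ (∃ p : G.Path y x, p.Inducing))

/-- The graph `M` corresponding to an SMCM `S`: distinct `x, y` are adjacent in `M`
iff there is an inducing path between them in `S`, with the edge oriented `x → y` if
`x` is an ancestor of `y` in `S`, `y → x` if `y` is an ancestor of `x` in `S`, and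
`x ↔ y` otherwise. -/
def mag (S : MGraph V) : MGraph V where
  dir x y := S.VAdj x y ∧ S.Ancestor x y
  bidir x y := S.VAdj x y ∧ ¬ S.Ancestor x y ∧ ¬ S.Ancestor y x
  dir_irrefl := fun x h => h.1.1 rfl
  bidir_irrefl := fun x h => h.1.1 rfl
  bidir_symm := fun _ _ h => ⟨⟨h.1.1.symm, h.1.2.symm⟩, h.2.2, h.2.1⟩

/-- An ancestral graph: at most one edge between any two vertices, and whenever `x`
is an ancestor of `y`, no edge between `x` and `y` has an arrowhead at `x`. -/
def Ancestral (G : MGraph V) : Prop :=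
  (∀ x y, G.Ancestor x y → x ≠ y → ¬ G.dir y x ∧ ¬ G.bidir x y) ∧
  (∀ x y, ¬ (G.dir x y ∧ G.bidir x y))

/-- A maximal ancestral graph: an ancestral graph in which every pair of non-adjacent
vertices is m-separated by some subset of the remaining vertices. -/
def IsMAG (G : MGraph V) : Prop :=
  G.Ancestral ∧ ∀ x y : V, x ≠ y → ¬ G.Adj x y →
    ∃ Z : Set V, x ∉ Z ∧ y ∉ Z ∧ G.MSep x y Z

/-- The number of edges of a mixed graph (directed edges plus bidirected edges, the
latter counted as unordered pairs). -/
noncomputable def numEdges (G : MGraph V) : ℕ :=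
  {p : V × V | G.dir p.1 p.2}.ncard +
    {e : Sym2 V | ∃ a b, e = s(a, b) ∧ G.bidir a b}.ncard

/-- The number of virtual adjacencies (unordered pairs of virtually adjacent
vertices). -/
noncomputable def numVAdj (G : MGraph V) : ℕ :=
  {e : Sym2 V | ∃ a b, e = s(a, b) ∧ G.VAdj a b}.ncard

/-- The number of m-separation statements entailed by the graph: triples `(X, Y, Z)`
of pairwise disjoint subsets with `X, Y` nonempty such that `X` and `Y` are
m-separated by `Z`. -/
noncomputable def numSep (G : MGraph V) : ℕ :=
  {t : Set V × Set V × Set V | t.1.Nonempty ∧ t.2.1.Nonempty ∧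
    Disjoint t.1 t.2.1 ∧ Disjoint t.1 t.2.2 ∧ Disjoint t.2.1 t.2.2 ∧
    G.MSepSets t.1 t.2.1 t.2.2}.ncard

/-- An unshielded triple `⟨a, z, b⟩`: `a, z` adjacent, `z, b` adjacent, `a, b` not
adjacent. -/
def UnshieldedTriple (G : MGraph V) (a z b : V) : Prop :=
  a ≠ z ∧ z ≠ b ∧ a ≠ b ∧ G.Adj a z ∧ G.Adj z b ∧ ¬ G.Adj a b

/-- Some edge between `a` and `z` has an arrowhead at `z`. -/
def ArrowAt (G : MGraph V) (a z : V) : Prop := G.dir a z ∨ G.bidir a z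

/-- An unshielded collider: an unshielded triple whose two edges both have arrowheads
at the middle vertex. -/
def UnshieldedCollider (G : MGraph V) (a z b : V) : Prop :=
  G.UnshieldedTriple a z b ∧ G.ArrowAt a z ∧ G.ArrowAt b z

/-- A discriminating path for `⟨X, Z, Y⟩`: a path `(V₀, V₁, ..., Vₘ = X, Z, Y)` with
`m ≥ 1` such that `V₀` and `Y` are not adjacent and every `Vᵢ` with `1 ≤ i ≤ m` is a
collider on the path and a parent of `Y`. -/
def IsDiscriminating (G : MGraph V) {v₀ w : V} (p : G.Path v₀ w) (X Z Y : V) : Prop :=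
  4 ≤ p.verts.length ∧ w = Y ∧
  p.vert (p.verts.length - 3) = X ∧
  p.vert (p.verts.length - 2) = Z ∧
  v₀ ≠ Y ∧ ¬ G.Adj v₀ Y ∧
  ∀ i, 1 ≤ i → i ≤ p.verts.length - 3 → p.ColliderAt i ∧ G.dir (p.vert i) Y

end MGraph

/-- An independence model over `V`: a set of triples `(X, Y, Z)` of pairwise disjoint
subsets of `V` with `X, Y` nonempty. -/
def IsIndepModel {V : Type} (I : Set (Set V × Set V × Set V)) : Prop :=
  ∀ t ∈ I, t.1.Nonempty ∧ t.2.1.Nonempty ∧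
    Disjoint t.1 t.2.1 ∧ Disjoint t.1 t.2.2 ∧ Disjoint t.2.1 t.2.2

/-- `G` satisfies the Markov assumption with `I`: every triple `(X, Y, Z)` such that
`X` and `Y` are m-separated by `Z` in `G` belongs to `I`. -/
def Markov {V : Type} (G : MGraph V) (I : Set (Set V × Set V × Set V)) : Prop :=
  ∀ X Y Z : Set V, X.Nonempty → Y.Nonempty →
    Disjoint X Y → Disjoint X Z → Disjoint Y Z →
    G.MSepSets X Y Z → (X, Y, Z) ∈ I

/-- `G` satisfies the Faithfulness assumption with `I`: every triple in `I` is
m-separated in `G`. -/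
def Faithful {V : Type} (G : MGraph V) (I : Set (Set V × Set V × Set V)) : Prop :=
  ∀ X Y Z : Set V, (X, Y, Z) ∈ I → G.MSepSets X Y Z

/-- `G` satisfies the Adjacency-faithfulness assumption with `I`: for adjacent
distinct `x, y` and any `Z ⊆ V ∖ {x, y}`, the triple `({x}, {y}, Z)` is not in `I`. -/
def AdjFaithful {V : Type} (G : MGraph V) (I : Set (Set V × Set V × Set V)) : Prop :=
  ∀ x y : V, x ≠ y → G.Adj x y →
    ∀ Z : Set V, x ∉ Z → y ∉ Z → ({x}, {y}, Z) ∉ I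

/-- `G` satisfies the V-adjacency-faithfulness assumption with `I`: for virtually
adjacent `x, y` and any `Z ⊆ V ∖ {x, y}`, the triple `({x}, {y}, Z)` is not in `I`. -/
def VAdjFaithful {V : Type} (G : MGraph V) (I : Set (Set V × Set V × Set V)) : Prop :=
  ∀ x y : V, G.VAdj x y →
    ∀ Z : Set V, x ∉ Z → y ∉ Z → ({x}, {y}, Z) ∉ I

/-- A MAG `G` is NoE-minimal with `I`: no MAG over `V` with strictly fewer edges
satisfies the Markov assumption with `I`. -/
def NoEMinimalMAG {V : Type} (G : MGraph V) (I : Set (Set V × Set V × Set V)) : Prop :=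
  ¬ ∃ G' : MGraph V, G'.IsMAG ∧ G'.numEdges < G.numEdges ∧ Markov G' I

/-- An SMCM `G` is NoE-minimal with `I`: no SMCM over `V` with strictly fewer edges
satisfies the Markov assumption with `I`. -/
def NoEMinimalSMCM {V : Type} (G : MGraph V) (I : Set (Set V × Set V × Set V)) : Prop :=
  ¬ ∃ G' : MGraph V, G'.Acyclic ∧ G'.numEdges < G.numEdges ∧ Markov G' I

/-- An SMCM `G` is V-adjacency-minimal with `I`: no SMCM over `V` with strictly fewer
virtual adjacencies satisfies the Markov assumption with `I`. -/
def VAdjMinimal {V : Type} (G : MGraph V) (I : Set (Set V × Set V × Set V)) : Prop :=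
  ¬ ∃ G' : MGraph V, G'.Acyclic ∧ G'.numVAdj < G.numVAdj ∧ Markov G' I

/-- A MAG `G` is NoI-minimal with `I`: no MAG over `V` entailing strictly more
m-separation statements satisfies the Markov assumption with `I`. -/
def NoIMinimalMAG {V : Type} (G : MGraph V) (I : Set (Set V × Set V × Set V)) : Prop :=
  ¬ ∃ G' : MGraph V, G'.IsMAG ∧ G.numSep < G'.numSep ∧ Markov G' I

/-- An SMCM `G` is NoI-minimal with `I`: no SMCM over `V` entailing strictly more
m-separation statements satisfies the Markov assumption with `I`. -/
def NoIMinimalSMCM {V : Type} (G : MGraph V) (I : Set (Set V × Set V × Set V)) : Prop :=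
  ¬ ∃ G' : MGraph V, G'.Acyclic ∧ G.numSep < G'.numSep ∧ Markov G' I
namespace S8
open List

attribute [local instance] Classical.propDecidable

variable {V : Type}

/-! ### Edge kind flipping -/

def flipK : EKind → EKind
  | .fwd => .bwd
  | .bwd => .fwd
  | .bi => .bi

@[simp] lemma flipK_flipK (k : EKind) : flipK (flipK k) = k := by cases k <;> rfl

def Coll (k1 k2 : EKind) : Prop := k1.arrowRight ∧ k2.arrowLeft

lemma coll_flip {a b : EKind} : Coll (flipK b) (flipK a) ↔ Coll a b := by
  cases a <;> cases b <;>
    simp [Coll, flipK, EKind.arrowLeft, EKind.arrowRight]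

lemma coll_fwd_right (k : EKind) : ¬ Coll k .fwd := by
  cases k <;> simp [Coll, EKind.arrowLeft, EKind.arrowRight]

lemma edgeKind_flip (G : MGraph V) (k : EKind) (a b : V) :
    G.edgeKind (flipK k) a b ↔ G.edgeKind k b a := by
  cases k
  · exact Iff.rfl
  · exact Iff.rfl
  · exact ⟨fun h => G.bidir_symm _ _ h, fun h => G.bidir_symm _ _ h⟩

/-! ### Pair-list chains -/

def chainP (G : MGraph V) : V → List (EKind × V) → Prop
  | _, [] => True
  | u, (k, v) :: t => G.edgeKind k u v ∧ chainP G v t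

def lastV : V → List (EKind × V) → V
  | u, [] => u
  | _, (_, v) :: t => lastV v t

def vertsOf (u : V) (l : List (EKind × V)) : List V := u :: l.map Prod.snd

@[simp] lemma lastV_nil (u : V) : lastV u ([] : List (EKind × V)) = u := rfl
@[simp] lemma lastV_cons (u : V) (k : EKind) (v : V) (t : List (EKind × V)) :
    lastV u ((k, v) :: t) = lastV v t := rfl

lemma lastV_append (u : V) (A B : List (EKind × V)) :
    lastV u (A ++ B) = lastV (lastV u A) B := by
  induction A generalizing u with
  | nil => rfl
  | cons q A ih => cases q; simp [lastV, ih]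

lemma chainP_append (G : MGraph V) (u : V) (A B : List (EKind × V)) :
    chainP G u (A ++ B) ↔ chainP G u A ∧ chainP G (lastV u A) B := by
  induction A generalizing u with
  | nil => simp [chainP]
  | cons q A ih => cases q; simp [chainP, ih, and_assoc]

lemma vertsOf_append (u : V) (A B : List (EKind × V)) :
    vertsOf u (A ++ B) = vertsOf u A ++ B.map Prod.snd := by simp [vertsOf]

lemma vertsOf_cons (u : V) (k : EKind) (v : V) (t : List (EKind × V)) :
    vertsOf u ((k, v) :: t) = u :: vertsOf v t := rfl

lemma getLast?_vertsOf (u : V) (l : List (EKind × V)) :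
    (vertsOf u l).getLast? = some (lastV u l) := by
  induction l generalizing u with
  | nil => rfl
  | cons q t ih =>
    cases q with
    | mk k v =>
      rw [vertsOf_cons, lastV_cons, ← ih v]
      cases h : vertsOf v t with
      | nil => exact absurd h (by simp [vertsOf])
      | cons a t' => rw [List.getLast?_cons_cons]

/-! ### Reversal -/

def revL : V → List (EKind × V) → List (EKind × V)
  | _, [] => []
  | u, (k, v) :: t => revL v t ++ [(flipK k, u)]

lemma revL_append (u : V) (A B : List (EKind × V)) :
    revL u (A ++ B) = revL (lastV u A) B ++ revL u A := by
  induction A generalizing u with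
  | nil => simp [revL, lastV]
  | cons q A ih => cases q; simp [revL, lastV, ih, List.append_assoc]

lemma lastV_lastV_revL (u : V) (l : List (EKind × V)) :
    lastV (lastV u l) (revL u l) = u := by
  cases l with
  | nil => rfl
  | cons q t => cases q; simp [revL, lastV, lastV_append]

lemma chainP_revL (G : MGraph V) (l : List (EKind × V)) :
    ∀ u : V, chainP G u l → chainP G (lastV u l) (revL u l) := by
  induction l with
  | nil => intro u _; trivial
  | cons q t ih =>
    cases q with
    | mk k v =>
      rintro u ⟨he, hc⟩
      rw [lastV_cons, revL, chainP_append]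
      refine ⟨ih v hc, ?_⟩
      rw [lastV_lastV_revL]
      exact ⟨(edgeKind_flip G k v u).mpr he, trivial⟩

lemma vertsOf_revL (l : List (EKind × V)) :
    ∀ u : V, vertsOf (lastV u l) (revL u l) = (vertsOf u l).reverse := by
  induction l with
  | nil => intro u; rfl
  | cons q t ih =>
    cases q with
    | mk k v =>
      intro u
      rw [lastV_cons, revL, vertsOf_append, ih v, vertsOf_cons]
      simp

/-! ### Bad collider count -/

def anZ (G : MGraph V) (Z : Set V) (v : V) : Prop := ∃ d ∈ Z, G.Ancestor v d

noncomputable def cPair (G : MGraph V) (Z : Set V) (q p : EKind × V) : ℕ :=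
  if Coll q.1 p.1 ∧ ¬ anZ G Z q.2 then 1 else 0

noncomputable def cOptJ (G : MGraph V) (Z : Set V) :
    Option (EKind × V) → Option (EKind × V) → ℕ
  | some q, some p => cPair G Z q p
  | _, _ => 0

noncomputable def badC (G : MGraph V) (Z : Set V) : List (EKind × V) → ℕ
  | [] => 0
  | q :: t => cOptJ G Z (some q) t.head? + badC G Z t

lemma badC_append (G : MGraph V) (Z : Set V) :
    ∀ A B : List (EKind × V),
      badC G Z (A ++ B) = badC G Z A + cOptJ G Z A.getLast? B.head? + badC G Z B := by
  intro A
  induction A with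
  | nil => intro B; simp [badC, cOptJ]
  | cons q A ih =>
    intro B
    cases A with
    | nil =>
      cases B with
      | nil => simp [badC, cOptJ]
      | cons p B' => simp [badC, cOptJ]
    | cons r A' =>
      have h1 : ((q :: r :: A') ++ B) = q :: ((r :: A') ++ B) := rfl
      rw [h1, badC, ih]
      have h2 : ((r :: A') ++ B).head? = some r := rfl
      have h3 : (q :: r :: A').getLast? = (r :: A').getLast? := List.getLast?_cons_cons
      rw [h2, h3]
      have h4 : (r :: A').head? = some r := rfl
      conv_rhs => rw [badC, h4]
      omega

lemma badC_fwdMap (G : MGraph V) (Z : Set V) (ds : List V) :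
    badC G Z (ds.map fun e => (EKind.fwd, e)) = 0 := by
  induction ds with
  | nil => rfl
  | cons d t ih =>
    cases t with
    | nil => simp [badC, cOptJ]
    | cons d2 t' =>
      rw [List.map_cons, badC, ih]
      have : ((d2 :: t').map fun e => (EKind.fwd, e)).head? = some (EKind.fwd, d2) := rfl
      rw [this]
      simp [cOptJ, cPair, coll_fwd_right]

lemma badC_revL (G : MGraph V) (Z : Set V) (l : List (EKind × V)) :
    ∀ u : V, badC G Z (revL u l) = badC G Z l := by
  induction l with
  | nil => intro u; rfl
  | cons q t ih =>
    cases q with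
    | mk k v =>
      intro u
      rw [revL, badC_append, ih v]
      have h1 : badC G Z [(flipK k, u)] = 0 := by simp [badC, cOptJ]
      rw [h1]
      have h2 : cOptJ G Z (revL v t).getLast? [(flipK k, u)].head?
          = cOptJ G Z (some (k, v)) t.head? := by
        cases t with
        | nil => simp [revL, cOptJ]
        | cons p t' =>
          cases p with
          | mk k2 v2 =>
            have h3 : (revL v ((k2, v2) :: t')).getLast? = some (flipK k2, v) := by
              rw [revL]; exact List.getLast?_concat
            rw [h3]
            show cPair G Z (flipK k2, v) (flipK k, u) = cPair G Z (k, v) (k2, v2)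
            unfold cPair
            by_cases hb : Coll k k2 ∧ ¬ anZ G Z v
            · rw [if_pos ⟨coll_flip.mpr hb.1, hb.2⟩, if_pos hb]
            · rw [if_neg, if_neg hb]
              intro hc
              exact hb ⟨coll_flip.mp hc.1, hc.2⟩
      rw [h2]
      conv_rhs => rw [badC]
      omega

/-! ### Relations on pairs -/

def GDr (G : MGraph V) (Z : Set V) (q p : EKind × V) : Prop :=
  (Coll q.1 p.1 → anZ G Z q.2) ∧ (¬ Coll q.1 p.1 → q.2 ∉ Z)

def SGr (G : MGraph V) (Z : Set V) (u w : V) (q p : EKind × V) : Prop :=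
  (Coll q.1 p.1 → anZ G Z q.2 ∨ G.Ancestor q.2 u ∨ G.Ancestor q.2 w) ∧
    (¬ Coll q.1 p.1 → q.2 ∉ Z)

def INDr (G : MGraph V) (u w : V) (q p : EKind × V) : Prop :=
  Coll q.1 p.1 ∧ (G.Ancestor q.2 u ∨ G.Ancestor q.2 w)

lemma gd_imp_sg (G : MGraph V) (Z : Set V) (u w : V) :
    ∀ q p : EKind × V, GDr G Z q p → SGr G Z u w q p :=
  fun _ _ h => ⟨fun hc => Or.inl (h.1 hc), h.2⟩

lemma ind_imp_sg (G : MGraph V) (Z : Set V) (u w : V) :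
    ∀ q p : EKind × V, INDr G u w q p → SGr G Z u w q p :=
  fun _ _ h => ⟨fun _ => Or.inr h.2, fun hn => absurd h.1 hn⟩

lemma decomp (G : MGraph V) (Z : Set V) (u w : V) :
    ∀ l : List (EKind × V), List.Chain' (SGr G Z u w) l →
      List.Chain' (GDr G Z) l ∨
        ∃ l1 k1 v k2 v2 t, l = l1 ++ (k1, v) :: (k2, v2) :: t ∧ Coll k1 k2 ∧
          ¬ anZ G Z v ∧ (G.Ancestor v u ∨ G.Ancestor v w) := by
  intro l
  induction l with
  | nil => intro _; left; exact List.IsChain.nil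
  | cons q t ih =>
    intro h
    cases t with
    | nil => left; exact List.IsChain.singleton _
    | cons p t' =>
      unfold List.Chain' at h; rw [List.isChain_cons_cons] at h
      obtain ⟨hqp, ht⟩ := h
      by_cases hb : Coll q.1 p.1 ∧ ¬ anZ G Z q.2
      · right
        exact ⟨[], q.1, q.2, p.1, p.2, t', by simp, hb.1, hb.2,
          (hqp.1 hb.1).resolve_left hb.2⟩
      · rcases ih ht with hg | ⟨l1, k1, v, k2, v2, t'', heq, h1, h2, h3⟩
        · left
          unfold List.Chain'; rw [List.isChain_cons_cons]
          refine ⟨⟨fun hc => ?_, hqp.2⟩, hg⟩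
          by_contra hna
          exact hb ⟨hc, hna⟩
        · right
          exact ⟨q :: l1, k1, v, k2, v2, t'', by rw [heq]; rfl, h1, h2, h3⟩

lemma chain'_revL (F : EKind → V → EKind → Prop) :
    ∀ (l : List (EKind × V)) (u : V),
      List.Chain' (fun q p : EKind × V => F q.1 q.2 p.1) l →
      List.Chain' (fun q p : EKind × V => F (flipK p.1) q.2 (flipK q.1)) (revL u l) := by
  intro l
  induction l with
  | nil => intro u _; simp [revL, List.Chain']
  | cons q t ih =>
    intro u h
    cases q with
    | mk k v =>
      rw [revL]
      refine List.isChain_append.mpr ⟨ih v (List.IsChain.tail h), by simp, ?_⟩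
      intro x hx y hy
      cases t with
      | nil => simp [revL] at hx
      | cons p t' =>
        cases p with
        | mk k2 v2 =>
          have h3 : (revL v ((k2, v2) :: t')).getLast? = some (flipK k2, v) := by
            rw [revL]; exact List.getLast?_concat
          rw [h3, Option.mem_some_iff] at hx
          simp only [List.head?_cons, Option.mem_some_iff] at hy
          subst hx; subst hy
          simp only [flipK_flipK]
          exact (List.isChain_cons_cons.mp h).1

/-! ### Directed chains -/

lemma chain_anc (G : MGraph V) :
    ∀ (ds : List V) (v : V), List.Chain G.dir v ds → ∀ e ∈ v :: ds, G.Ancestor v e := by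
  intro ds
  induction ds with
  | nil =>
    intro v _ e he
    rw [List.mem_singleton] at he
    subst he
    exact Relation.ReflTransGen.refl
  | cons d t ih =>
    intro v h e he
    unfold List.Chain at h; rw [List.chain_cons] at h
    rcases List.mem_cons.mp he with rfl | he'
    · exact Relation.ReflTransGen.refl
    · exact Relation.ReflTransGen.head h.1 (ih d h.2 e he')

lemma chain_nodup (G : MGraph V) (hG : G.Acyclic) :
    ∀ (ds : List V) (v : V), List.Chain G.dir v ds → (v :: ds).Nodup := by
  intro ds
  induction ds with
  | nil => intro v _; simp
  | cons d t ih =>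
    intro v h
    unfold List.Chain at h; rw [List.chain_cons] at h
    refine List.nodup_cons.mpr ⟨?_, ih d h.2⟩
    intro hv
    have h1 : G.Ancestor d v := chain_anc G t d h.2 v hv
    have h2 : G.Ancestor v d := Relation.ReflTransGen.single h.1
    have h3 := hG v d h2 h1
    subst h3
    exact G.dir_irrefl v h.1

lemma subchain (G : MGraph V) :
    ∀ (ds : List V) (v : V), List.Chain G.dir v ds → ∀ a ∈ v :: ds,
      ∃ ds', List.Chain G.dir a ds' ∧ (a :: ds') <:+ (v :: ds) := by
  intro ds
  induction ds with
  | nil =>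
    intro v _ a ha
    rw [List.mem_singleton] at ha
    subst ha
    exact ⟨[], List.Chain.nil, List.suffix_refl _⟩
  | cons d t ih =>
    intro v h a ha
    rcases List.mem_cons.mp ha with rfl | ha'
    · exact ⟨d :: t, h, List.suffix_refl _⟩
    · obtain ⟨ds', hc, hs⟩ := ih d (List.chain_cons.mp h).2 a ha'
      exact ⟨ds', hc, hs.trans (List.suffix_cons v (d :: t))⟩

lemma getLast?_of_suffix {a : V} {l L : List V} (h : (a :: l) <:+ L) :
    L.getLast? = (a :: l).getLast? := by
  obtain ⟨pre, hpre⟩ := h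
  rw [← hpre]
  exact List.getLast?_append_of_ne_nil pre (by simp)

lemma chainP_fwdMap (G : MGraph V) :
    ∀ (ds : List V) (a : V), List.Chain G.dir a ds →
      chainP G a (ds.map fun e => (EKind.fwd, e)) := by
  intro ds
  induction ds with
  | nil => intro a _; trivial
  | cons d t ih =>
    intro a h
    unfold List.Chain at h; rw [List.chain_cons] at h
    exact ⟨h.1, ih d h.2⟩

lemma vertsOf_fwdMap (a : V) (ds : List V) :
    vertsOf a (ds.map fun e => (EKind.fwd, e)) = a :: ds := by
  simp [vertsOf]

lemma chain'_GD_fwdMap (G : MGraph V) (Z : Set V) (ds : List V) (h : ∀ e ∈ ds, e ∉ Z) :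
    List.Chain' (GDr G Z) (ds.map fun e => (EKind.fwd, e)) := by
  unfold List.Chain'; rw [List.isChain_map]
  refine List.isChain_iff_getElem.mpr fun i hi => ?_
  exact ⟨fun hc => absurd hc (coll_fwd_right _), fun _ => h _ (List.getElem_mem _)⟩

/-! ### First hit -/

lemma firstHit (S : V → Prop) :
    ∀ (l : List (EKind × V)) (u : V), S (lastV u l) →
      S u ∨ (¬ S u ∧ ∃ l1 ka a l2, l = l1 ++ (ka, a) :: l2 ∧ S a ∧
        ∀ e ∈ l1.map Prod.snd, ¬ S e) := by
  intro l
  induction l with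
  | nil => intro u h; exact Or.inl h
  | cons q t ih =>
    intro u h
    cases q with
    | mk k v =>
      by_cases hu : S u
      · exact Or.inl hu
      · right
        refine ⟨hu, ?_⟩
        by_cases hv : S v
        · exact ⟨[], k, v, t, rfl, hv, by simp⟩
        · rcases ih v h with hv' | ⟨_, l1, ka, a, l2, heq, ha, hl1⟩
          · exact absurd hv' hv
          · refine ⟨(k, v) :: l1, ka, a, l2, by rw [heq]; rfl, ha, ?_⟩
            intro e he
            rw [List.map_cons, List.mem_cons] at he
            rcases he with rfl | he'
            · exact hv
            · exact hl1 e he'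

/-! ### Bridges between pair-lists and `Path` -/

lemma getD_irrel {α : Type _} (L : List α) (i : ℕ) (d d' : α) (h : i < L.length) :
    L.getD i d = L.getD i d' := by
  rw [List.getD_eq_getElem L d h, List.getD_eq_getElem L d' h]

lemma chainP_valid (G : MGraph V) :
    ∀ (l : List (EKind × V)) (u : V), chainP G u l → ∀ i, i < l.length →
      G.edgeKind ((l.map Prod.fst).getD i .fwd)
        ((vertsOf u l).getD i u) ((vertsOf u l).getD (i + 1) u) := by
  intro l
  induction l with
  | nil => intro u _ i hi; simp at hi
  | cons q t ih =>
    intro u hc i hi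
    cases q with
    | mk k v =>
      obtain ⟨he, ht⟩ := hc
      cases i with
      | zero => simpa [vertsOf] using he
      | succ i =>
        have hi' : i < t.length := by simpa using hi
        have H := ih v ht i hi'
        have e1 : (vertsOf v t).getD i v = (vertsOf v t).getD i u :=
          getD_irrel _ _ _ _ (by simp [vertsOf]; omega)
        have e2 : (vertsOf v t).getD (i + 1) v = (vertsOf v t).getD (i + 1) u :=
          getD_irrel _ _ _ _ (by simp [vertsOf]; omega)
        rw [e1, e2] at H
        simpa [vertsOf_cons, List.getD_cons_succ] using H

lemma valid_chainP (G : MGraph V) :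
    ∀ (l : List (EKind × V)) (u : V),
      (∀ i, i < l.length →
        G.edgeKind ((l.map Prod.fst).getD i .fwd)
          ((vertsOf u l).getD i u) ((vertsOf u l).getD (i + 1) u)) →
      chainP G u l := by
  intro l
  induction l with
  | nil => intro u _; trivial
  | cons q t ih =>
    intro u h
    cases q with
    | mk k v =>
      refine ⟨by simpa [vertsOf] using h 0 (by simp), ih v fun i hi => ?_⟩
      have H := h (i + 1) (by simp; omega)
      rw [List.map_cons, List.getD_cons_succ, vertsOf_cons, List.getD_cons_succ,
        List.getD_cons_succ] at H
      have e1 : (vertsOf v t).getD i u = (vertsOf v t).getD i v :=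
        getD_irrel _ _ _ _ (by simp [vertsOf]; omega)
      have e2 : (vertsOf v t).getD (i + 1) v = (vertsOf v t).getD (i + 1) u :=
        getD_irrel _ _ _ _ (by simp [vertsOf]; omega)
      rw [e1, ← e2] at H
      exact H

def mkP (G : MGraph V) {u w : V} (l : List (EKind × V))
    (hch : chainP G u l) (hnd : (vertsOf u l).Nodup) (hlast : lastV u l = w) :
    G.Path u w :=
  ⟨vertsOf u l, l.map Prod.fst, by simp [vertsOf], hnd, rfl,
    by rw [getLast?_vertsOf, hlast],
    fun i hi => chainP_valid G l u hch i (by simpa using hi)⟩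

lemma BT (G : MGraph V) (Z : Set V) {u w : V} {l : List (EKind × V)}
    (hch : chainP G u l) (hnd : (vertsOf u l).Nodup) (hlast : lastV u l = w)
    (hgd : List.Chain' (GDr G Z) l) : ∃ p : G.Path u w, p.MConn Z := by
  refine ⟨mkP G l hch hnd hlast, ?_⟩
  intro i hi1 hi2
  have hverts : (mkP G l hch hnd hlast).verts = vertsOf u l := rfl
  have hlen : (vertsOf u l).length = l.length + 1 := by simp [vertsOf]
  rw [hverts, hlen] at hi2
  obtain ⟨j, rfl⟩ : ∃ j, i = j + 1 := ⟨i - 1, by omega⟩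
  have hj : j + 1 < l.length := by omega
  have hj0 : j < l.length := by omega
  have hkind : ∀ m, (mkP G l hch hnd hlast).kind m = (l.map Prod.fst).getD m .fwd :=
    fun m => rfl
  have hvert : ∀ m, (mkP G l hch hnd hlast).vert m = (vertsOf u l).getD m u :=
    fun m => rfl
  have ek1 : (l.map Prod.fst).getD j .fwd = (l.get ⟨j, hj0⟩).1 := by
    rw [List.getD_eq_getElem _ _ (by simpa using hj0)]
    simp
  have ek2 : (l.map Prod.fst).getD (j + 1) .fwd = (l.get ⟨j + 1, hj⟩).1 := by
    rw [List.getD_eq_getElem _ _ (by simpa using hj)]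
    simp
  have ev : (vertsOf u l).getD (j + 1) u = (l.get ⟨j, hj0⟩).2 := by
    rw [vertsOf, List.getD_cons_succ, List.getD_eq_getElem _ _ (by simpa using hj0)]
    simp
  have hR := List.isChain_iff_getElem.mp hgd j (by omega)
  have hcoll_iff : (mkP G l hch hnd hlast).ColliderAt (j + 1) ↔
      Coll (l.get ⟨j, hj0⟩).1 (l.get ⟨j + 1, hj⟩).1 := by
    unfold MGraph.Path.ColliderAt Coll
    rw [hkind, hkind, hverts, hlen]
    simp only [Nat.add_sub_cancel]
    rw [ek1, ek2]
    exact ⟨fun h => ⟨h.2.2.1, h.2.2.2⟩, fun h => ⟨by omega, by omega, h.1, h.2⟩⟩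
  constructor
  · intro hcol
    have h1 := hR.1 (hcoll_iff.mp hcol)
    rw [hvert, ev]
    exact h1
  · intro hncol
    have h2 := hR.2 fun hc => hncol (hcoll_iff.mpr hc)
    rw [hvert, ev]
    exact h2

lemma zip_fst : ∀ (a : List EKind) (b : List V), a.length = b.length →
    (a.zip b).map Prod.fst = a := by
  intro a
  induction a with
  | nil => intro b _; rfl
  | cons k a ih =>
    intro b h
    cases b with
    | nil => simp at h
    | cons v b => simp_all

lemma zip_snd : ∀ (a : List EKind) (b : List V), a.length = b.length →
    (a.zip b).map Prod.snd = b := by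
  intro a
  induction a with
  | nil =>
    intro b h
    cases b with
    | nil => rfl
    | cons v b => simp at h
  | cons k a ih =>
    intro b h
    cases b with
    | nil => simp at h
    | cons v b => simp_all

lemma BE (G : MGraph V) {u w : V} (p : G.Path u w) (hp : p.Inducing) :
    ∃ l, chainP G u l ∧ (vertsOf u l).Nodup ∧ lastV u l = w ∧
      List.Chain' (INDr G u w) l := by
  cases hv : p.verts with
  | nil => exact absurd p.head_eq (by rw [hv]; simp)
  | cons a t =>
    have ha : a = u := by
      have h := p.head_eq
      rw [hv] at h
      simpa using h
    rw [ha] at hv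
    clear ha
    have hlen : p.kinds.length = t.length := by
      have h := p.len_eq
      rw [hv] at h
      simp at h
      omega
    have hfst : (p.kinds.zip t).map Prod.fst = p.kinds := zip_fst _ _ hlen
    have hsnd : (p.kinds.zip t).map Prod.snd = t := zip_snd _ _ hlen
    have hverts : vertsOf u (p.kinds.zip t) = p.verts := by
      rw [hv, vertsOf, hsnd]
    have hll : (p.kinds.zip t).length = p.kinds.length := by
      simp [hlen]
    refine ⟨p.kinds.zip t, ?_, ?_, ?_, ?_⟩
    · apply valid_chainP
      intro i hi
      rw [hfst, hverts]
      exact p.valid i (by rwa [hll] at hi)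
    · rw [hverts]; exact p.nodup
    · have h2 := getLast?_vertsOf u (p.kinds.zip t)
      rw [hverts, p.last_eq] at h2
      exact (Option.some.inj h2).symm
    · refine List.isChain_iff_getElem.mpr fun i hi => ?_
      have hi' : i + 1 < (p.kinds.zip t).length := by omega
      have hi0 : i < (p.kinds.zip t).length := by omega
      have hik : i < p.kinds.length := by rwa [hll] at hi0
      have hik1 : i + 1 < p.kinds.length := by rwa [hll] at hi'
      have hit : i < t.length := by omega
      have hvlen : p.verts.length = p.kinds.length + 1 := p.len_eq
      obtain ⟨hcol, hanc⟩ := hp (i + 1) (by omega) (by rw [hvlen]; omega)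
      obtain ⟨-, -, hA, hB⟩ := hcol
      have e1 : ((p.kinds.zip t)[i]).1 = p.kind i := by
        show ((p.kinds.zip t)[i]).1 = p.kinds.getD i .fwd
        rw [List.getElem_zip, List.getD_eq_getElem _ _ hik]
      have e2 : ((p.kinds.zip t)[i + 1]).1 = p.kind (i + 1) := by
        show ((p.kinds.zip t)[i+1]).1 = p.kinds.getD (i + 1) .fwd
        rw [List.getElem_zip, List.getD_eq_getElem _ _ hik1]
      have e3 : ((p.kinds.zip t)[i]).2 = p.vert (i + 1) := by
        show ((p.kinds.zip t)[i]).2 = p.verts.getD (i + 1) u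
        rw [List.getElem_zip, hv, List.getD_cons_succ,
          List.getD_eq_getElem _ _ hit]
      refine ⟨⟨?_, ?_⟩, ?_⟩
      · rw [e1]
        simpa using hA
      · rw [e2]
        exact hB
      · rw [e3]
        exact hanc

/-! ### The splice step -/

lemma lastV_fwdMap_eq (a b : V) (ds : List V) (h : (a :: ds).getLast? = some b) :
    lastV a (ds.map fun e => (EKind.fwd, e)) = b := by
  have h2 := getLast?_vertsOf a (ds.map fun e => (EKind.fwd, e))
  rw [vertsOf_fwdMap, h] at h2
  exact (Option.some.inj h2).symm

lemma splice (G : MGraph V) (Z : Set V) (hG : G.Acyclic) {u w : V}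
    {l l1 : List (EKind × V)} {k1 : EKind} {v : V} {k2 : EKind} {v2 : V}
    {t : List (EKind × V)}
    (hdec : l = l1 ++ (k1, v) :: (k2, v2) :: t)
    (hcoll : Coll k1 k2) (hbad : ¬ anZ G Z v) (hanc : G.Ancestor v w)
    (hch : chainP G u l) (hnd : (vertsOf u l).Nodup) (hlast : lastV u l = w)
    (hsg : List.Chain' (SGr G Z u w) l) :
    ∃ l', chainP G u l' ∧ (vertsOf u l').Nodup ∧ lastV u l' = w ∧
      List.Chain' (SGr G Z u w) l' ∧ badC G Z l' < badC G Z l := by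
  obtain ⟨ds, hdsc, hdsl⟩ := List.exists_isChain_cons_of_relationReflTransGen hanc
  have hDlast : (v :: ds).getLast? = some w := by
    rw [List.getLast?_eq_getLast (l := v :: ds) (by simp), hdsl]
  have hDanc : ∀ e ∈ v :: ds, G.Ancestor v e := chain_anc G ds v hdsc
  have hDnAnZ : ∀ e ∈ v :: ds, ¬ anZ G Z e := by
    rintro e he ⟨d, hd, hza⟩
    exact hbad ⟨d, hd, (hDanc e he).trans hza⟩
  have hDZ : ∀ e ∈ v :: ds, e ∉ Z := fun e he hez =>
    hDnAnZ e he ⟨e, hez, Relation.ReflTransGen.refl⟩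
  have hDnd : (v :: ds).Nodup := chain_nodup G hG ds v hdsc
  have hldec : l = (l1 ++ [(k1, v)]) ++ (k2, v2) :: t := by rw [hdec]; simp
  have hPlast : lastV u (l1 ++ [(k1, v)]) = v := by rw [lastV_append]; rfl
  have hbadl : badC G Z l =
      badC G Z (l1 ++ [(k1, v)]) + 1 + badC G Z ((k2, v2) :: t) := by
    rw [hldec, badC_append, List.getLast?_concat]
    have h2 : cOptJ G Z (some (k1, v)) (((k2, v2) : EKind × V) :: t).head? = 1 := by
      show cPair G Z (k1, v) (k2, v2) = 1
      unfold cPair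
      rw [if_pos ⟨hcoll, hbad⟩]
    rw [h2]
  have hch' := hch
  rw [hldec, chainP_append] at hch'
  have hchP : chainP G u (l1 ++ [(k1, v)]) := hch'.1
  rcases firstHit (fun e => e ∈ v :: ds) (l1 ++ [(k1, v)]) u
      (by rw [hPlast]; exact List.mem_cons_self) with hSu |
      ⟨hnSu, P1, ka, a, P2, hPdec, hSa, hP1⟩
  · -- the start `u` already lies on the directed path
    obtain ⟨ds', hc', hsuf⟩ := subchain G ds v hdsc u hSu
    have hlast' : (u :: ds').getLast? = some w := by
      rw [← getLast?_of_suffix hsuf]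
      exact hDlast
    refine ⟨ds'.map (fun e => (EKind.fwd, e)), chainP_fwdMap G ds' u hc', ?_, ?_, ?_, ?_⟩
    · rw [vertsOf_fwdMap]
      exact hDnd.sublist hsuf.sublist
    · exact lastV_fwdMap_eq u w ds' hlast'
    · exact List.IsChain.imp (gd_imp_sg G Z u w)
        (chain'_GD_fwdMap G Z ds' fun e he =>
          hDZ e (hsuf.sublist.subset (List.mem_cons_of_mem _ he)))
    · rw [badC_fwdMap]
      omega
  · -- splice at the first vertex `a` of the chain that lies on the directed path
    obtain ⟨ds'', hc'', hsuf⟩ := subchain G ds v hdsc a hSa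
    have hlastd : (a :: ds'').getLast? = some w := by
      rw [← getLast?_of_suffix hsuf]
      exact hDlast
    have hQpre : l1 ++ [(k1, v)] = (P1 ++ [(ka, a)]) ++ P2 := by rw [hPdec]; simp
    have hQlast : lastV u (P1 ++ [(ka, a)]) = a := by rw [lastV_append]; rfl
    refine ⟨(P1 ++ [(ka, a)]) ++ ds''.map (fun e => (EKind.fwd, e)), ?_, ?_, ?_, ?_, ?_⟩
    · rw [chainP_append]
      have hchP' := hchP
      rw [hQpre, chainP_append] at hchP'
      refine ⟨hchP'.1, ?_⟩
      rw [hQlast]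
      exact chainP_fwdMap G ds'' a hc''
    · have hva : vertsOf u ((P1 ++ [(ka, a)]) ++ ds''.map (fun e => (EKind.fwd, e)))
          = (u :: P1.map Prod.snd) ++ (a :: ds'') := by
        rw [vertsOf_append]
        simp [vertsOf]
      rw [hva]
      apply List.Nodup.append
      · have hv2 : vertsOf u l = (u :: P1.map Prod.snd) ++
            (a :: (P2.map Prod.snd ++ (v2 :: t.map Prod.snd))) := by
          rw [hldec, hQpre]
          simp [vertsOf]
        rw [hv2] at hnd
        exact hnd.of_append_left
      · exact hDnd.sublist hsuf.sublist
      · intro e he he'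
        have heD : e ∈ v :: ds := hsuf.sublist.subset he'
        rcases List.mem_cons.mp he with rfl | heP
        · exact hnSu heD
        · exact hP1 e heP heD
    · rw [lastV_append, hQlast]
      exact lastV_fwdMap_eq a w ds'' hlastd
    · apply List.isChain_append.mpr
      refine ⟨?_, ?_, ?_⟩
      · have hl3 : l = (P1 ++ [(ka, a)]) ++ (P2 ++ (k2, v2) :: t) := by
          rw [hldec, hQpre]; simp
        have hsg' := hsg
        rw [hl3] at hsg'
        exact (List.isChain_append.mp hsg').1
      · exact List.IsChain.imp (gd_imp_sg G Z u w)
          (chain'_GD_fwdMap G Z ds'' fun e he =>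
            hDZ e (hsuf.sublist.subset (List.mem_cons_of_mem _ he)))
      · intro x hx y hy
        rw [List.getLast?_concat] at hx
        have hxx : x = (ka, a) := by have := hx; simp at this; exact this.symm
        subst hxx
        cases ds'' with
        | nil => simp at hy
        | cons d0 ds3 =>
          have hyy : y = (EKind.fwd, d0) := by have := hy; simp at this; exact this.symm
          subst hyy
          exact ⟨fun hc => absurd hc (coll_fwd_right _),
            fun _ => hDZ a (hsuf.sublist.subset (List.mem_cons_self))⟩
    · rw [badC_append, badC_fwdMap, List.getLast?_concat]
      have hj : cOptJ G Z (some (ka, a))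
          ((ds''.map fun e => ((EKind.fwd : EKind), e)).head?) = 0 := by
        cases ds'' with
        | nil => rfl
        | cons d0 ds3 =>
          show cPair G Z (ka, a) (.fwd, d0) = 0
          unfold cPair
          rw [if_neg]
          intro h
          exact coll_fwd_right _ h.1
      rw [hj]
      have h6 : badC G Z (l1 ++ [(k1, v)]) =
          badC G Z (P1 ++ [(ka, a)]) +
            cOptJ G Z (P1 ++ [(ka, a)]).getLast? P2.head? + badC G Z P2 := by
        rw [hQpre, badC_append]
      omega

/-! ### Main induction -/

lemma badC_pos (G : MGraph V) (Z : Set V) {l l1 : List (EKind × V)} {k1 : EKind}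
    {v : V} {k2 : EKind} {v2 : V} {t : List (EKind × V)}
    (hdec : l = l1 ++ (k1, v) :: (k2, v2) :: t) (hcoll : Coll k1 k2)
    (hbad : ¬ anZ G Z v) : 0 < badC G Z l := by
  have h0 : l = (l1 ++ [(k1, v)]) ++ (k2, v2) :: t := by rw [hdec]; simp
  rw [h0, badC_append, List.getLast?_concat]
  have h2 : cOptJ G Z (some (k1, v)) (((k2, v2) : EKind × V) :: t).head? = 1 := by
    show cPair G Z (k1, v) (k2, v2) = 1
    unfold cPair
    rw [if_pos ⟨hcoll, hbad⟩]
  rw [h2]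
  omega

lemma ML (G : MGraph V) (Z : Set V) (hG : G.Acyclic) :
    ∀ (n : ℕ) (l : List (EKind × V)) (u w : V), chainP G u l →
      (vertsOf u l).Nodup → lastV u l = w → List.Chain' (SGr G Z u w) l →
      badC G Z l ≤ n →
      (∃ p : G.Path u w, p.MConn Z) ∨ (∃ p : G.Path w u, p.MConn Z) := by
  intro n
  induction n with
  | zero =>
    intro l u w hch hnd hlast hsg hbc
    rcases decomp G Z u w l hsg with hgd | ⟨l1, k1, v, k2, v2, t, hdec, hcoll, hbad, -⟩
    · exact Or.inl (BT G Z hch hnd hlast hgd)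
    · exact absurd hbc (by have := badC_pos G Z hdec hcoll hbad; omega)
  | succ n ih =>
    intro l u w hch hnd hlast hsg hbc
    rcases decomp G Z u w l hsg with hgd | ⟨l1, k1, v, k2, v2, t, hdec, hcoll, hbad, hor⟩
    · exact Or.inl (BT G Z hch hnd hlast hgd)
    · rcases hor with hAu | hAw
      · -- the bad collider is an ancestor of `u`: work with the reversed chain
        have hch2 : chainP G w (revL u l) := by
          have h := chainP_revL G l u hch
          rwa [hlast] at h
        have hnd2 : (vertsOf w (revL u l)).Nodup := by
          have h := vertsOf_revL l u
          rw [hlast] at h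
          rw [h]
          exact List.nodup_reverse.mpr hnd
        have hlast2 : lastV w (revL u l) = u := by
          have h := lastV_lastV_revL u l
          rwa [hlast] at h
        have hsg2 : List.Chain' (SGr G Z w u) (revL u l) := by
          have h2 := chain'_revL
            (fun kk vv kk2 => (Coll kk kk2 → anZ G Z vv ∨ G.Ancestor vv u ∨ G.Ancestor vv w) ∧
              (¬ Coll kk kk2 → vv ∉ Z)) l u hsg
          refine h2.imp fun q p h => ⟨fun hc => ?_, fun hnc => h.2 fun hc => hnc (coll_flip.mp hc)⟩
          rcases h.1 (coll_flip.mpr hc) with h' | h' | h'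
          · exact Or.inl h'
          · exact Or.inr (Or.inr h')
          · exact Or.inr (Or.inl h')
        have hdec2 : revL u l =
            revL v2 t ++ (flipK k2, v) :: (flipK k1, lastV u l1) :: revL u l1 := by
          rw [hdec, revL_append]
          have e1 : revL (lastV u l1) ((k1, v) :: (k2, v2) :: t) =
              (revL v2 t ++ [(flipK k2, v)]) ++ [(flipK k1, lastV u l1)] := by
            rw [revL, revL]
          rw [e1]
          simp
        obtain ⟨l', h1, h2, h3, h4, h5⟩ :=
          splice G Z hG hdec2 (coll_flip.mpr hcoll) hbad hAu hch2 hnd2 hlast2 hsg2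
        have h6 : badC G Z l' ≤ n := by
          have hb2 : badC G Z (revL u l) = badC G Z l := badC_revL G Z l u
          omega
        exact (ih l' w u h1 h2 h3 h4 h6).symm
      · obtain ⟨l', h1, h2, h3, h4, h5⟩ :=
          splice G Z hG hdec hcoll hbad hAw hch hnd hlast hsg
        exact ih l' u w h1 h2 h3 h4 (by omega)

lemma main_lemma (G : MGraph V) (Z : Set V) (hG : G.Acyclic) {u w : V}
    (p : G.Path u w) (hp : p.Inducing) :
    (∃ q : G.Path u w, q.MConn Z) ∨ (∃ q : G.Path w u, q.MConn Z) := by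
  obtain ⟨l, hch, hnd, hlast, hind⟩ := BE G p hp
  exact ML G Z hG (badC G Z l) l u w hch hnd hlast
    (hind.imp (ind_imp_sg G Z u w)) le_rfl

end S8


/-- If an SMCM `G` over a finite vertex set satisfies the Markov and
Faithfulness assumptions with an independence model `I`, then `G` satisfies the
V-adjacency-faithfulness assumption with `I`. -/
theorem statement_8 {V : Type} [Fintype V] [DecidableEq V]
    (G : MGraph V) (hG : G.Acyclic)
    (I : Set (Set V × Set V × Set V)) (hI : IsIndepModel I)
    (hMarkov : Markov G I) (hFaithful : Faithful G I) :
    VAdjFaithful G I := by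
  intro x y hv Z hxZ hyZ hmem
  have hsep : G.MSep x y Z := hFaithful {x} {y} Z hmem x rfl y rfl
  obtain ⟨hne, hind⟩ := hv
  rcases hind with ⟨p, hp⟩ | ⟨p, hp⟩
  · rcases S8.main_lemma G Z hG p hp with ⟨q, hq⟩ | ⟨q, hq⟩
    · exact hsep.2.2.2.1 q hq
    · exact hsep.2.2.2.2 q hq
  · rcases S8.main_lemma G Z hG p hp with ⟨q, hq⟩ | ⟨q, hq⟩
    · exact hsep.2.2.2.2 q hq
    · exact hsep.2.2.2.1 q hq
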